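/- arXiv:1007.0522 — 2 statements merged into one kernel-verified Lean document; each statement's English description precedes it below -/
import Mathlib

section
/- Let T ≥ B ≥ 1, α ≥ 2, and T₂ ≥ T + B be integers, and suppose a streaming code with source alphabet S and channel alphabet X corrects erasure bursts of length B with delay T and also corrects erasure bursts of length αB with delay T₂. Set P = (α−1)B + T₂ and consider the periodic erasure pattern that erases exactly the time slots t ∈ [mP, mP + αB − 1] for every integer m ≥ 0. Then for every m ≥ 0: if two source streams s and s′ produce channel input streams that agree at all non-erased time slots t ≤ (m+1)P − 1, then their channel input streams agree at ALL time slots t ≤ (m+1)P − 1 (in particular, the entire source stream is uniquely determined by the outputs of this periodic erasure channel). -/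
/-- The channel input stream produced by the streaming code `f` (a sequence of causal
encoding functions `f t : S^(t+1) → X`) from the source stream `s`. -/
def chanStream {S X : Type*} (f : ∀ t : ℕ, (Fin (t + 1) → S) → X) (s : ℕ → S) (t : ℕ) : X :=
  f t fun i => s i.val

/-- Output at time `t` of the burst-erasure channel with burst length `B` and burst starting
position `j`: `none` (an erasure) for `j ≤ t ≤ j + B - 1`, and the channel input otherwise. -/
def burstOut {S X : Type*} (f : ∀ t : ℕ, (Fin (t + 1) → S) → X) (B j : ℕ) (s : ℕ → S)
    (t : ℕ) : Option X :=
  if j ≤ t ∧ t ≤ j + B - 1 then none else some (chanStream f s t)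

/-- The streaming code `f` corrects erasure bursts of length `B` with delay `T`: there are
decoding functions `γ t` recovering `s t` from the channel outputs `y 0, …, y (t + T)`,
for every source stream `s` and every burst starting position `j`. -/
def Corrects {S X : Type*} (f : ∀ t : ℕ, (Fin (t + 1) → S) → X) (B T : ℕ) : Prop :=
  ∃ γ : ∀ t : ℕ, (Fin (t + T + 1) → Option X) → S,
    ∀ (s : ℕ → S) (j t : ℕ), γ t (fun i => burstOut f B j s i.val) = s t

/-- If two sources agree up to time `t`, the channel inputs agree at time `t`. -/
lemma chanStream_congr {S X : Type*} (f : ∀ t : ℕ, (Fin (t + 1) → S) → X)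
    (s s' : ℕ → S) (t : ℕ) (h : ∀ i, i ≤ t → s i = s' i) :
    chanStream f s t = chanStream f s' t := by
  unfold chanStream
  congr 1
  funext i
  exact h i.val (Nat.lt_succ_iff.mp i.isLt)

/-- Decoding principle: if the burst-channel outputs agree up to time `t + T`,
the sources agree at time `t`. -/
lemma decode_eq {S X : Type*} {f : ∀ t : ℕ, (Fin (t + 1) → S) → X} {B T : ℕ}
    (h : Corrects f B T) (s s' : ℕ → S) (j t : ℕ)
    (hout : ∀ i, i ≤ t + T → burstOut f B j s i = burstOut f B j s' i) :
    s t = s' t := by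
  obtain ⟨γ, hγ⟩ := h
  rw [← hγ s j t, ← hγ s' j t]
  congr 1
  funext i
  exact hout i.val (Nat.lt_succ_iff.mp i.isLt)

/-- Slots in `[m*P + α*B, (m+1)*P)` are not erased by the periodic pattern. -/
lemma not_erased {α B P : ℕ} (hab : 1 ≤ α * B) (hle : α * B ≤ P) (m t : ℕ)
    (h1 : m * P + α * B ≤ t) (h2 : t < (m + 1) * P) :
    ¬ ∃ m' : ℕ, m' * P ≤ t ∧ t ≤ m' * P + α * B - 1 := by
  rintro ⟨m', hm1, hm2⟩
  rcases le_or_gt m' m with h | h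
  · have h3 : m' * P ≤ m * P := Nat.mul_le_mul_right P h
    omega
  · have h3 : (m + 1) * P ≤ m' * P := Nat.mul_le_mul_right P h
    omega

/-- Key induction step. -/
lemma key_step {S X : Type*} (B T α T₂ P : ℕ) (hB : 1 ≤ B) (hBT : B ≤ T) (hα : 2 ≤ α)
    (hT₂ : T + B ≤ T₂) (hP : P = (α - 1) * B + T₂)
    (f : ∀ t : ℕ, (Fin (t + 1) → S) → X)
    (h1 : Corrects f B T) (h2 : Corrects f (α * B) T₂)
    (m : ℕ) (s s' : ℕ → S)
    (Hprev : ∀ t, t < m * P → chanStream f s t = chanStream f s' t)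
    (H : ∀ t : ℕ, t ≤ (m + 1) * P - 1 →
        (¬ ∃ m' : ℕ, m' * P ≤ t ∧ t ≤ m' * P + α * B - 1) →
        chanStream f s t = chanStream f s' t) :
    ∀ t : ℕ, t ≤ (m + 1) * P - 1 → chanStream f s t = chanStream f s' t := by
  -- arithmetic setup
  have hab : (α - 1) * B + B = α * B := by
    have h : α - 1 + 1 = α := by omega
    calc (α - 1) * B + B = (α - 1 + 1) * B := by ring
    _ = α * B := by rw [h]
  have hsum : (m + 1) * P = m * P + P := by ring
  have habB : 2 ≤ α * B := le_trans (by omega) (Nat.mul_le_mul hα hB)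
  have hαBP : α * B ≤ P := by omega
  -- Step 1: sources agree for u < m*P + (α-1)*B, via the long code with burst at m*P
  have step1 : ∀ u, u < m * P + (α - 1) * B → s u = s' u := by
    intro u hu
    apply decode_eq h2 s s' (m * P) u
    intro i hi
    unfold burstOut
    split
    · rfl
    · rename_i hni
      congr 1
      rcases lt_or_ge i (m * P) with hc | hc
      · exact Hprev i hc
      · have hc2 : m * P + α * B ≤ i := by omega
        exact H i (by omega) (not_erased (by omega) hαBP m i hc2 (by omega))
  -- Step 2: sources agree for u < m*P + α*B, via the short code with burst at m*P + (α-1)*B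
  have step2 : ∀ u, u < m * P + α * B → s u = s' u := by
    intro u hu
    rcases lt_or_ge u (m * P + (α - 1) * B) with hu1 | hu1
    · exact step1 u hu1
    apply decode_eq h1 s s' (m * P + (α - 1) * B) u
    intro i hi
    unfold burstOut
    split
    · rfl
    · rename_i hni
      congr 1
      rcases lt_or_ge i (m * P + (α - 1) * B) with hc | hc
      · exact chanStream_congr f s s' i (fun k hk => step1 k (by omega))
      · have hc2 : m * P + α * B ≤ i := by omega
        exact H i (by omega) (not_erased (by omega) hαBP m i hc2 (by omega))
  -- Conclusion
  intro t ht
  rcases lt_or_ge t (m * P + α * B) with hc | hc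
  · exact chanStream_congr f s s' t (fun k hk => step2 k (by omega))
  · exact H t ht (not_erased (by omega) hαBP m t hc (by omega))

/-- Periodic-erasure-channel lemma, case `T₂ ≥ T + B`. -/
theorem stmt_4 {S X : Type*} (B T α T₂ P : ℕ) (hB : 1 ≤ B) (hBT : B ≤ T) (hα : 2 ≤ α)
    (hT₂ : T + B ≤ T₂) (hP : P = (α - 1) * B + T₂)
    (f : ∀ t : ℕ, (Fin (t + 1) → S) → X)
    (h1 : Corrects f B T) (h2 : Corrects f (α * B) T₂) :
    (∀ (m : ℕ) (s s' : ℕ → S),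
      (∀ t : ℕ, t ≤ (m + 1) * P - 1 →
          (¬ ∃ m' : ℕ, m' * P ≤ t ∧ t ≤ m' * P + α * B - 1) →
          chanStream f s t = chanStream f s' t) →
      ∀ t : ℕ, t ≤ (m + 1) * P - 1 → chanStream f s t = chanStream f s' t)
    ∧ (∀ s s' : ℕ → S,
      (∀ t : ℕ, (¬ ∃ m' : ℕ, m' * P ≤ t ∧ t ≤ m' * P + α * B - 1) →
          chanStream f s t = chanStream f s' t) →
      s = s') := by
  have hPpos : 1 ≤ P := by omega
  have part1 : ∀ (m : ℕ) (s s' : ℕ → S),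
      (∀ t : ℕ, t ≤ (m + 1) * P - 1 →
          (¬ ∃ m' : ℕ, m' * P ≤ t ∧ t ≤ m' * P + α * B - 1) →
          chanStream f s t = chanStream f s' t) →
      ∀ t : ℕ, t ≤ (m + 1) * P - 1 → chanStream f s t = chanStream f s' t := by
    intro m
    induction m with
    | zero =>
      intro s s' H
      exact key_step B T α T₂ P hB hBT hα hT₂ hP f h1 h2 0 s s' (by omega) H
    | succ n ih =>
      intro s s' H
      apply key_step B T α T₂ P hB hBT hα hT₂ hP f h1 h2 (n + 1) s s' _ H
      intro t ht
      have hle : (n + 1) * P - 1 ≤ (n + 1 + 1) * P - 1 := by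
        have : (n + 1) * P ≤ (n + 1 + 1) * P := Nat.mul_le_mul_right P (by omega)
        omega
      exact ih s s' (fun u hu => H u (le_trans hu hle)) t (by omega)
  refine ⟨part1, fun s s' H => ?_⟩
  funext t
  set m := t + T with hm
  have hbig : t + T ≤ (m + 1) * P - 1 := by
    have : m + 1 ≤ (m + 1) * P := Nat.le_mul_of_pos_right _ (by omega)
    omega
  have hchan : ∀ u, u ≤ t + T → chanStream f s u = chanStream f s' u := by
    intro u hu
    exact part1 m s s' (fun v hv hne => H v hne) u (le_trans hu hbig)
  apply decode_eq h1 s s' (t + T + 1) t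
  intro i hi
  unfold burstOut
  split
  · rename_i hc; omega
  · exact congrArg some (hchan i hi)
end

section
/- Let T ≥ B ≥ 1, α ≥ 2 be integers and let T₂ ≤ T + B be a positive integer, and suppose a streaming code with source alphabet S and channel alphabet X corrects erasure bursts of length B with delay T and also corrects erasure bursts of length αB with delay T₂. Set P = αB + T and consider the periodic erasure pattern that erases exactly the time slots t ∈ [mP, mP + αB − 1] for every integer m ≥ 0. Then for every m ≥ 0: if two source streams s and s′ produce channel input streams that agree at all non-erased time slots t ≤ (m+1)P − 1, then their channel input streams agree at ALL time slots t ≤ (m+1)P − 1 (in particular, the entire source stream is uniquely determined by the outputs of this periodic erasure channel). -/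
lemma chan_congr {S X : Type*} (f : ∀ t : ℕ, (Fin (t + 1) → S) → X) (s s' : ℕ → S) (t : ℕ)
    (h : ∀ k, k ≤ t → s k = s' k) : chanStream f s t = chanStream f s' t := by
  unfold chanStream
  congr 1
  funext i
  exact h i.val (Nat.lt_succ_iff.mp i.isLt)

lemma nonerased (P a m i : ℕ) (ha : 1 ≤ a) (h1 : m * P + a ≤ i) (h2 : i < (m + 1) * P) :
    ¬ ∃ m' : ℕ, m' * P ≤ i ∧ i ≤ m' * P + a - 1 := by
  rintro ⟨m', hl, hr⟩
  have e : (m + 1) * P = m * P + P := by ring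
  rcases le_or_gt m' m with h | h
  · have := Nat.mul_le_mul_right P h
    omega
  · have e2 : (m + 1) * P ≤ m' * P := Nat.mul_le_mul_right P h
    omega

lemma step_lemma {S X : Type*} (B T α T₂ P : ℕ) (hB : 1 ≤ B) (hBT : B ≤ T) (hα : 2 ≤ α)
    (hT₂ : T₂ ≤ T + B) (hP : P = α * B + T)
    (f : ∀ t : ℕ, (Fin (t + 1) → S) → X)
    (h1 : Corrects f B T) (h2 : Corrects f (α * B) T₂)
    (m : ℕ) (s s' : ℕ → S)
    (hyp : ∀ t : ℕ, t ≤ (m + 1) * P - 1 →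
          (¬ ∃ m' : ℕ, m' * P ≤ t ∧ t ≤ m' * P + α * B - 1) →
          chanStream f s t = chanStream f s' t)
    (chanlow : ∀ i, i < m * P → chanStream f s i = chanStream f s' i) :
    ∀ t, t < m * P + α * B → s t = s' t := by
  obtain ⟨γ1, hγ1⟩ := h1
  obtain ⟨γ2, hγ2⟩ := h2
  have hab : B ≤ α * B := Nat.le_mul_of_pos_left B (by omega)
  have eP : (m + 1) * P = m * P + P := by ring
  have hP1 : 1 ≤ P := by omega
  have hypHigh : ∀ i, m * P + α * B ≤ i → i < (m + 1) * P →
      chanStream f s i = chanStream f s' i := by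
    intro i hlo hhi
    exact hyp i (by omega) (nonerased P (α * B) m i (by omega) hlo hhi)
  have step1 : ∀ t, t + B < m * P + α * B → s t = s' t := by
    intro t ht
    rw [← hγ2 s (m * P) t, ← hγ2 s' (m * P) t]
    congr 1
    funext i
    have hi : i.val ≤ t + T₂ := Nat.lt_succ_iff.mp i.isLt
    show burstOut f (α * B) (m * P) s i.val = burstOut f (α * B) (m * P) s' i.val
    unfold burstOut
    split
    · rfl
    · rename_i hc
      rcases lt_or_ge i.val (m * P) with h | h
      · rw [chanlow i.val h]
      · have h2 : m * P + α * B ≤ i.val := by omega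
        rw [hypHigh i.val h2 (by omega)]
  intro t ht
  rw [← hγ1 s (m * P + α * B - B) t, ← hγ1 s' (m * P + α * B - B) t]
  congr 1
  funext i
  have hi : i.val ≤ t + T := Nat.lt_succ_iff.mp i.isLt
  show burstOut f B (m * P + α * B - B) s i.val = burstOut f B (m * P + α * B - B) s' i.val
  unfold burstOut
  split
  · rfl
  · rename_i hc
    rcases lt_or_ge i.val (m * P + α * B - B) with h | h
    · rw [chan_congr f s s' i.val (fun k hk => step1 k (by omega))]
    · have h2 : m * P + α * B ≤ i.val := by omega
      rw [hypHigh i.val h2 (by omega)]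

lemma key_lemma {S X : Type*} (B T α T₂ P : ℕ) (hB : 1 ≤ B) (hBT : B ≤ T) (hα : 2 ≤ α)
    (hT₂ : T₂ ≤ T + B) (hP : P = α * B + T)
    (f : ∀ t : ℕ, (Fin (t + 1) → S) → X)
    (h1 : Corrects f B T) (h2 : Corrects f (α * B) T₂) :
    ∀ (m : ℕ) (s s' : ℕ → S),
      (∀ t : ℕ, t ≤ (m + 1) * P - 1 →
          (¬ ∃ m' : ℕ, m' * P ≤ t ∧ t ≤ m' * P + α * B - 1) →
          chanStream f s t = chanStream f s' t) →
      ∀ t, t < m * P + α * B → s t = s' t := by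
  have hab : B ≤ α * B := Nat.le_mul_of_pos_left B (by omega)
  have hP1 : 1 ≤ P := by omega
  intro m
  induction m with
  | zero =>
    intro s s' hyp
    exact step_lemma B T α T₂ P hB hBT hα hT₂ hP f h1 h2 0 s s' hyp (fun i hi => by omega)
  | succ k ih =>
    intro s s' hyp
    have e1 : (k + 1) * P = k * P + P := by ring
    have e2 : (k + 1 + 1) * P = k * P + P + P := by ring
    have hypk : ∀ t : ℕ, t ≤ (k + 1) * P - 1 →
        (¬ ∃ m' : ℕ, m' * P ≤ t ∧ t ≤ m' * P + α * B - 1) →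
        chanStream f s t = chanStream f s' t := by
      intro t ht hne
      exact hyp t (by omega) hne
    have src := ih s s' hypk
    have chanlow : ∀ i, i < (k + 1) * P → chanStream f s i = chanStream f s' i := by
      intro i hi
      rcases lt_or_ge i (k * P + α * B) with h | h
      · exact chan_congr f s s' i (fun j hj => src j (by omega))
      · exact hypk i (by omega) (nonerased P (α * B) k i (by omega) h (by omega))
    exact step_lemma B T α T₂ P hB hBT hα hT₂ hP f h1 h2 (k + 1) s s' hyp chanlow

/-- Periodic-erasure-channel lemma, case `T₂ ≤ T + B`. With period `P = α*B + T` and the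
erasure pattern erasing exactly the slots `t ∈ [m*P, m*P + α*B - 1]` for every `m ≥ 0`:
for every `m`, if two source streams produce channel inputs agreeing at all non-erased slots
`t ≤ (m+1)*P - 1`, then their channel inputs agree at all slots `t ≤ (m+1)*P - 1`; in
particular the source stream is uniquely determined by the outputs of this channel. -/
theorem stmt_5 {S X : Type*} (B T α T₂ P : ℕ) (hB : 1 ≤ B) (hBT : B ≤ T) (hα : 2 ≤ α)
    (hT₂pos : 1 ≤ T₂) (hT₂ : T₂ ≤ T + B) (hP : P = α * B + T)
    (f : ∀ t : ℕ, (Fin (t + 1) → S) → X)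
    (h1 : Corrects f B T) (h2 : Corrects f (α * B) T₂) :
    (∀ (m : ℕ) (s s' : ℕ → S),
      (∀ t : ℕ, t ≤ (m + 1) * P - 1 →
          (¬ ∃ m' : ℕ, m' * P ≤ t ∧ t ≤ m' * P + α * B - 1) →
          chanStream f s t = chanStream f s' t) →
      ∀ t : ℕ, t ≤ (m + 1) * P - 1 → chanStream f s t = chanStream f s' t)
    ∧ (∀ s s' : ℕ → S,
      (∀ t : ℕ, (¬ ∃ m' : ℕ, m' * P ≤ t ∧ t ≤ m' * P + α * B - 1) →
          chanStream f s t = chanStream f s' t) →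
      s = s') := by
  have hab : B ≤ α * B := Nat.le_mul_of_pos_left B (by omega)
  have hP1 : 1 ≤ P := by omega
  constructor
  · intro m s s' hyp t ht
    have e1 : (m + 1) * P = m * P + P := by ring
    have src := key_lemma B T α T₂ P hB hBT hα hT₂ hP f h1 h2 m s s' hyp
    rcases lt_or_ge t (m * P + α * B) with h | h
    · exact chan_congr f s s' t (fun j hj => src j (by omega))
    · exact hyp t ht (nonerased P (α * B) m t (by omega) h (by omega))
  · intro s s' hyp
    funext t
    have ht : t ≤ t * P := Nat.le_mul_of_pos_right t hP1
    exact key_lemma B T α T₂ P hB hBT hα hT₂ hP f h1 h2 t s s'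
      (fun u _ hne => hyp u hne) t (by omega)
end
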